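/- Let P, Q, R, S be a pqrs-quad and let F : ℂ → ℂ be an entire function satisfying the special double confluent Heun equation ℋ[F] = 0, i.e. F″(w) + (ℓ + μ(e^{−w} − e^{w}))·F′(w) + (λ − (ℓ+1)μ·e^w)·F(w) = 0 for all w ∈ ℂ. Then the function L_A[F], defined by L_A[F](w) = e^{μ(e^w + e^{−w})}·(Q(iπ−w)·F(iπ−w) − e^{−w}·P(iπ−w)·F′(iπ−w)), also satisfies ℋ[L_A[F]] = 0 on all of ℂ. -/

import Mathlib

noncomputable def ipi : ℂ := (Real.pi : ℂ) * Complex.I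

noncomputable def heunOp (ell lam mu : ℂ) (F : ℂ → ℂ) : ℂ → ℂ := fun w =>
  deriv (deriv F) w + (ell + mu * (Complex.exp (-w) - Complex.exp w)) * deriv F w +
    (lam - (ell + 1) * mu * Complex.exp w) * F w

noncomputable def opLA (mu : ℂ) (P Q : ℂ → ℂ) (F : ℂ → ℂ) : ℂ → ℂ := fun w =>
  Complex.exp (mu * (Complex.exp w + Complex.exp (-w))) *
    (Q (ipi - w) * F (ipi - w) - Complex.exp (-w) * P (ipi - w) * deriv F (ipi - w))

/-!
Write `E(w) = e^{μ(e^w + e^{-w})}`. Then `L_A[F]` has the shape `E(w)·(a(w)·F(iπ-w) + b(w)·F'(iπ-w))`,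
and since `F''(iπ-w)` can be eliminated with the Heun equation at `iπ-w` (where `e^{iπ-w} = -e^{-w}`),
differentiation preserves this shape, acting on the coefficient pair `(a, b)` by an explicit
first-order operator. Starting from `(a, b) = (Q(iπ-w), -e^{-w}P(iπ-w))`, the pqrs system lets one
compute the coefficient pairs of the first two derivatives in closed form in `P, Q, R, S`, and in
`ℋ[L_A[F]]` the coefficients of `F(iπ-w)` and `F'(iπ-w)` then cancel identically.
-/

open Complex

structure IsPQRSQuad (ell lam mu : ℂ) (P Q R S : ℂ → ℂ) : Prop where
  differentiable_P : Differentiable ℂ P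
  differentiable_Q : Differentiable ℂ Q
  differentiable_R : Differentiable ℂ R
  differentiable_S : Differentiable ℂ S
  deriv_P : ∀ w : ℂ, exp w * deriv P w =
    (mu + (ell - 1) * exp w) * P w - Q w + exp (2 * w) * R w
  deriv_Q : ∀ w : ℂ, deriv Q w =
    exp w * ((lam - (ell + 1) * mu * exp w) * P w + mu * Q w + S w)
  deriv_R : ∀ w : ℂ, exp w * deriv R w =
    -(lam + mu ^ 2) * P w + exp w * (2 * (ell - 1) - mu * exp w) * R w - S w
  deriv_S : ∀ w : ℂ, exp w * deriv S w =
    -(lam + mu ^ 2) * Q w + exp (2 * w) * (lam - (ell + 1) * mu * exp w) * R w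
      + ((ell - 1) * exp w - mu) * S w

lemma exp_ipi_sub (w : ℂ) : exp (ipi - w) = -exp (-w) := by
  rw [sub_eq_add_neg, exp_add, ipi, exp_pi_mul_I, neg_one_mul]

lemma exp_neg_ipi_sub (w : ℂ) : exp (-(ipi - w)) = -exp w := by
  rw [exp_neg, exp_ipi_sub, exp_neg, inv_neg, inv_inv]

lemma exp_two_mul_ipi_sub (w : ℂ) : exp (2 * (ipi - w)) = exp (-w) ^ 2 := by
  rw [two_mul, exp_add, exp_ipi_sub, neg_mul_neg, sq]

lemma exp_mul_exp_neg (w : ℂ) : exp w * exp (-w) = 1 := by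
  rw [← exp_add, add_neg_cancel, exp_zero]

noncomputable def twistedReflection (mu : ℂ) (F a b : ℂ → ℂ) : ℂ → ℂ := fun x =>
  exp (mu * (exp x + exp (-x))) * (a x * F (ipi - x) + b x * deriv F (ipi - x))

lemma opLA_eq_twistedReflection (mu : ℂ) (P Q F : ℂ → ℂ) :
    opLA mu P Q F = twistedReflection mu F (fun x => Q (ipi - x))
      (fun x => -(exp (-x) * P (ipi - x))) := by
  funext x
  simp only [opLA, twistedReflection]
  ring

lemma deriv_twistedReflection {ell lam mu : ℂ} {F : ℂ → ℂ} (hF : Differentiable ℂ F)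
    (hF' : Differentiable ℂ (deriv F)) (hHeun : ∀ w : ℂ, heunOp ell lam mu F w = 0)
    {a b a' b' a₁ b₁ : ℂ → ℂ} (ha : ∀ x, HasDerivAt a (a' x) x)
    (hb : ∀ x, HasDerivAt b (b' x) x)
    (ha₁ : ∀ x, a₁ x = mu * (exp x - exp (-x)) * a x + a' x
      + (lam + (ell + 1) * mu * exp (-x)) * b x)
    (hb₁ : ∀ x, b₁ x = b' x + ell * b x - a x) :
    deriv (twistedReflection mu F a b) = twistedReflection mu F a₁ b₁ := by
  funext x
  have hE : HasDerivAt (fun x => exp (mu * (exp x + exp (-x))))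
      (exp (mu * (exp x + exp (-x))) * (mu * (exp x + exp (-x) * -1))) x :=
    (((hasDerivAt_exp x).add (hasDerivAt_neg x).cexp).const_mul mu).cexp
  have hFu := (hF _).hasDerivAt.comp_const_sub ipi x
  have hF'u := (hF' _).hasDerivAt.comp_const_sub ipi x
  refine (hE.mul (((ha x).mul hFu).add ((hb x).mul hF'u))).deriv.trans ?_
  have hF'' := hHeun (ipi - x)
  rw [heunOp, exp_ipi_sub, exp_neg_ipi_sub] at hF''
  simp only [twistedReflection, ha₁, hb₁, Pi.add_apply, Pi.mul_apply]
  linear_combination (-exp (mu * (exp x + exp (-x))) * b x) * hF''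

namespace IsPQRSQuad

variable {ell lam mu : ℂ} {P Q R S : ℂ → ℂ}

lemma deriv_P_ipi_sub (h : IsPQRSQuad ell lam mu P Q R S) (w : ℂ) :
    deriv P (ipi - w) = -exp w *
      ((mu - (ell - 1) * exp (-w)) * P (ipi - w) - Q (ipi - w) + exp (-w) ^ 2 * R (ipi - w)) := by
  have h1 := h.deriv_P (ipi - w)
  rw [exp_ipi_sub, exp_two_mul_ipi_sub] at h1
  linear_combination (-exp w) * h1 - deriv P (ipi - w) * exp_mul_exp_neg w

lemma deriv_Q_ipi_sub (h : IsPQRSQuad ell lam mu P Q R S) (w : ℂ) :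
    deriv Q (ipi - w) = -exp (-w) *
      ((lam + (ell + 1) * mu * exp (-w)) * P (ipi - w) + mu * Q (ipi - w) + S (ipi - w)) := by
  have h2 := h.deriv_Q (ipi - w)
  rw [exp_ipi_sub] at h2
  linear_combination h2

lemma deriv_R_ipi_sub (h : IsPQRSQuad ell lam mu P Q R S) (w : ℂ) :
    deriv R (ipi - w) = exp w * ((lam + mu ^ 2) * P (ipi - w) + S (ipi - w))
      + (2 * (ell - 1) + mu * exp (-w)) * R (ipi - w) := by
  have h3 := h.deriv_R (ipi - w)
  rw [exp_ipi_sub] at h3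
  linear_combination (-exp w) * h3
    - (deriv R (ipi - w) - (2 * (ell - 1) + mu * exp (-w)) * R (ipi - w)) * exp_mul_exp_neg w

lemma deriv_S_ipi_sub (h : IsPQRSQuad ell lam mu P Q R S) (w : ℂ) :
    deriv S (ipi - w) = exp w * (lam + mu ^ 2) * Q (ipi - w)
      - exp (-w) * (lam + (ell + 1) * mu * exp (-w)) * R (ipi - w)
      + (ell - 1 + mu * exp w) * S (ipi - w) := by
  have h4 := h.deriv_S (ipi - w)
  rw [exp_ipi_sub, exp_two_mul_ipi_sub] at h4
  linear_combination (-exp w) * h4 - (deriv S (ipi - w)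
    + exp (-w) * (lam + (ell + 1) * mu * exp (-w)) * R (ipi - w) - (ell - 1) * S (ipi - w))
      * exp_mul_exp_neg w

lemma deriv_opLA (h : IsPQRSQuad ell lam mu P Q R S) {F : ℂ → ℂ} (hF : Differentiable ℂ F)
    (hF' : Differentiable ℂ (deriv F)) (hHeun : ∀ w : ℂ, heunOp ell lam mu F w = 0) :
    deriv (opLA mu P Q F) = twistedReflection mu F
      (fun x => mu * exp x * Q (ipi - x) + exp (-x) * S (ipi - x))
      (fun x => -(mu * P (ipi - x)) - exp (-x) ^ 2 * R (ipi - x)) := by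
  rw [opLA_eq_twistedReflection]
  refine deriv_twistedReflection hF hF' hHeun
    (fun x => (h.differentiable_Q _).hasDerivAt.comp_const_sub ipi x)
    (fun x => ((hasDerivAt_neg x).cexp.mul
      ((h.differentiable_P _).hasDerivAt.comp_const_sub ipi x)).neg)
    (fun x => ?_) (fun x => ?_)
  · rw [h.deriv_Q_ipi_sub x]
    ring
  · rw [h.deriv_P_ipi_sub x]
    simp only [exp_neg]
    field_simp
    ring

lemma deriv_deriv_opLA (h : IsPQRSQuad ell lam mu P Q R S) {F : ℂ → ℂ}
    (hF : Differentiable ℂ F) (hF' : Differentiable ℂ (deriv F))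
    (hHeun : ∀ w : ℂ, heunOp ell lam mu F w = 0) :
    deriv (deriv (opLA mu P Q F)) = twistedReflection mu F
      (fun x => (mu ^ 2 * exp x ^ 2 + mu * exp x - mu ^ 2 - lam) * Q (ipi - x)
        + (mu - ell * exp (-x) - mu * exp (-x) ^ 2) * S (ipi - x))
      (fun x => (-(mu ^ 2 * exp x) - mu + (lam + mu ^ 2) * exp (-x)) * P (ipi - x)
        + exp (-x) * (ell * exp (-x) + mu * exp (-x) ^ 2 - mu) * R (ipi - x)) := by
  rw [h.deriv_opLA hF hF' hHeun]
  refine deriv_twistedReflection hF hF' hHeun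
    (fun x => (((hasDerivAt_exp x).const_mul mu).mul
      ((h.differentiable_Q _).hasDerivAt.comp_const_sub ipi x)).add
        ((hasDerivAt_neg x).cexp.mul ((h.differentiable_S _).hasDerivAt.comp_const_sub ipi x)))
    (fun x => (((h.differentiable_P _).hasDerivAt.comp_const_sub ipi x).const_mul mu).neg.sub
      (((hasDerivAt_neg x).cexp.pow 2).mul
        ((h.differentiable_R _).hasDerivAt.comp_const_sub ipi x)))
    (fun x => ?_) (fun x => ?_)
  · rw [h.deriv_Q_ipi_sub x, h.deriv_S_ipi_sub x]
    simp only [exp_neg]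
    field_simp
    ring
  · rw [h.deriv_P_ipi_sub x, h.deriv_R_ipi_sub x]
    simp only [exp_neg, Pi.pow_apply, Nat.add_one_sub_one, pow_one]
    field_simp
    ring

end IsPQRSQuad

theorem statement_8 (ell lam mu : ℂ) (P Q R S : ℂ → ℂ)
    (hP : Differentiable ℂ P) (hQ : Differentiable ℂ Q)
    (hR : Differentiable ℂ R) (hS : Differentiable ℂ S)
    (hsys1 : ∀ w : ℂ, Complex.exp w * deriv P w =
      (mu + (ell - 1) * Complex.exp w) * P w - Q w + Complex.exp (2 * w) * R w)
    (hsys2 : ∀ w : ℂ, deriv Q w =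
      Complex.exp w * ((lam - (ell + 1) * mu * Complex.exp w) * P w + mu * Q w + S w))
    (hsys3 : ∀ w : ℂ, Complex.exp w * deriv R w =
      -(lam + mu ^ 2) * P w + Complex.exp w * (2 * (ell - 1) - mu * Complex.exp w) * R w - S w)
    (hsys4 : ∀ w : ℂ, Complex.exp w * deriv S w =
      -(lam + mu ^ 2) * Q w + Complex.exp (2 * w) * (lam - (ell + 1) * mu * Complex.exp w) * R w
        + ((ell - 1) * Complex.exp w - mu) * S w)
    (F : ℂ → ℂ) (hF : Differentiable ℂ F) (hF' : Differentiable ℂ (deriv F))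
    (hHeun : ∀ w : ℂ, heunOp ell lam mu F w = 0) :
    ∀ w : ℂ, heunOp ell lam mu (opLA mu P Q F) w = 0 := by
  have hquad : IsPQRSQuad ell lam mu P Q R S :=
    ⟨hP, hQ, hR, hS, hsys1, hsys2, hsys3, hsys4⟩
  intro w
  simp only [heunOp]
  rw [hquad.deriv_deriv_opLA hF hF' hHeun, hquad.deriv_opLA hF hF' hHeun,
    opLA_eq_twistedReflection]
  simp only [twistedReflection, exp_neg]
  field_simp
  ring
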